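/- arXiv:2207.13031 — 3 statements merged into one kernel-verified Lean document; each statement's English description precedes it below -/
import Mathlib

section
/- Let A ∈ ℝ^{m×n} and U ⊆ ℝ^n be a subspace containing a point x̂. Suppose ε ∈ (0,1), δ ≥ 0, b = Aξ + η for some ξ ∈ ℝ^n and η ∈ ℝ^m, and assume: (a) ‖A(x̂−ξ)‖ ≤ 2‖x̂−ξ‖, (b) (1−ε)‖z‖ ≤ ‖Az‖ for all z ∈ U, (c) x* ∈ U with ‖Ax*−b‖ ≤ δ. Then ‖x*−ξ‖ ≤ (1 + 2/(1−ε))‖x̂−ξ‖ + (δ+‖η‖)/(1−ε). -/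
open Matrix

/-- Deterministic robust-recovery bound: if `x̂ ∈ U`, `‖A(x̂ - ξ)‖ ≤ 2‖x̂ - ξ‖`,
`(1-ε)‖z‖ ≤ ‖Az‖` on `U`, and `x* ∈ U` satisfies `‖Ax* - b‖ ≤ δ` where
`b = Aξ + η`, then `‖x* - ξ‖ ≤ (1 + 2/(1-ε))‖x̂ - ξ‖ + (δ + ‖η‖)/(1-ε)`. -/
theorem robust_recovery_bound {m n : ℕ}
    (A : Matrix (Fin m) (Fin n) ℝ) (U : Submodule ℝ (EuclideanSpace ℝ (Fin n)))
    (xhat : EuclideanSpace ℝ (Fin n)) (hxhat : xhat ∈ U)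
    (ε δ : ℝ) (hε : ε ∈ Set.Ioo (0 : ℝ) 1) (hδ : 0 ≤ δ)
    (ξ : EuclideanSpace ℝ (Fin n)) (η : EuclideanSpace ℝ (Fin m))
    (b : EuclideanSpace ℝ (Fin m)) (hb : b = A.toEuclideanLin ξ + η)
    (ha : ‖A.toEuclideanLin (xhat - ξ)‖ ≤ 2 * ‖xhat - ξ‖)
    (hlb : ∀ z ∈ U, (1 - ε) * ‖z‖ ≤ ‖A.toEuclideanLin z‖)
    (xstar : EuclideanSpace ℝ (Fin n)) (hxstar : xstar ∈ U)
    (hres : ‖A.toEuclideanLin xstar - b‖ ≤ δ) :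
    ‖xstar - ξ‖ ≤ (1 + 2 / (1 - ε)) * ‖xhat - ξ‖ + (δ + ‖η‖) / (1 - ε) := by
  obtain ⟨hε0, hε1⟩ := hε
  have h1ε : (0:ℝ) < 1 - ε := by linarith
  have hmem : xstar - xhat ∈ U := U.sub_mem hxstar hxhat
  have key : (1 - ε) * ‖xstar - xhat‖ ≤ δ + ‖η‖ + 2 * ‖xhat - ξ‖ := by
    have h2 := hlb _ hmem
    have h3 : ‖A.toEuclideanLin (xstar - xhat)‖ ≤ δ + ‖η‖ + 2 * ‖xhat - ξ‖ := by
      have e1 : A.toEuclideanLin (xstar - xhat)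
          = (A.toEuclideanLin xstar - b) + η - (A.toEuclideanLin (xhat - ξ)) := by
        simp [hb, map_sub]
        abel
      calc ‖A.toEuclideanLin (xstar - xhat)‖
          ≤ ‖(A.toEuclideanLin xstar - b) + η‖ + ‖A.toEuclideanLin (xhat - ξ)‖ := by
            rw [e1]; exact norm_sub_le _ _
        _ ≤ ‖A.toEuclideanLin xstar - b‖ + ‖η‖ + ‖A.toEuclideanLin (xhat - ξ)‖ := by
            gcongr; exact norm_add_le _ _
        _ ≤ δ + ‖η‖ + 2 * ‖xhat - ξ‖ := by gcongr
    linarith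
  have hstar : ‖xstar - xhat‖ ≤ (δ + ‖η‖ + 2 * ‖xhat - ξ‖) / (1 - ε) :=
    (le_div_iff₀ h1ε).2 (by linarith [key])
  have tri : ‖xstar - ξ‖ ≤ ‖xstar - xhat‖ + ‖xhat - ξ‖ := norm_sub_le_norm_sub_add_norm_sub _ _ _
  have : (δ + ‖η‖ + 2 * ‖xhat - ξ‖) / (1 - ε)
      = 2 / (1 - ε) * ‖xhat - ξ‖ + (δ + ‖η‖) / (1 - ε) := by ring
  nlinarith [hstar, tri]
end

section
/- With L(β,ε) = (ln(4/β) + r ln(12/ε)) / γ(ε/2), γ: (0,1] → ℝ₊ continuous strictly increasing, r ≥ 1: if n > L(1,1), then there exist unique β₀, ε₀ ∈ (0,1) with L(β₀,1) = n and L(1,ε₀) = n; moreover for every β₁ ∈ (β₀,1) there exists a unique ε₁ ∈ (ε₀,1) with L(β₁,ε₁) = n, and L(β₁,ε) < n for all ε ∈ (ε₁,1). -/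
/-- With `L(β,ε) = (ln(4/β) + r ln(12/ε)) / γ(ε/2)` for continuous strictly
increasing positive `γ` on `(0,1]` and `r ≥ 1`: if `n > L(1,1)`, there exist
unique `β₀, ε₀ ∈ (0,1)` with `L(β₀,1) = n` and `L(1,ε₀) = n`; moreover, for every
`β₁ ∈ (β₀,1)` there is a unique `ε₁ ∈ (ε₀,1)` with `L(β₁,ε₁) = n`, and
`L(β₁,ε) < n` for all `ε ∈ (ε₁,1)`. -/
theorem L_level_set_structure (γ : ℝ → ℝ) (r : ℝ) (hr : 1 ≤ r)
    (hpos : ∀ x ∈ Set.Ioc (0 : ℝ) 1, 0 < γ x)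
    (hcont : ContinuousOn γ (Set.Ioc (0 : ℝ) 1))
    (hmono : StrictMonoOn γ (Set.Ioc (0 : ℝ) 1))
    (L : ℝ → ℝ → ℝ)
    (hL : ∀ β ε, L β ε = (Real.log (4 / β) + r * Real.log (12 / ε)) / γ (ε / 2))
    (n : ℝ) (hn : n > L 1 1) :
    ∃ β₀ ∈ Set.Ioo (0 : ℝ) 1, ∃ ε₀ ∈ Set.Ioo (0 : ℝ) 1,
      L β₀ 1 = n ∧ L 1 ε₀ = n ∧
      (∀ β ∈ Set.Ioo (0 : ℝ) 1, L β 1 = n → β = β₀) ∧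
      (∀ ε ∈ Set.Ioo (0 : ℝ) 1, L 1 ε = n → ε = ε₀) ∧
      ∀ β₁ ∈ Set.Ioo β₀ 1,
        ∃ ε₁ ∈ Set.Ioo ε₀ 1, L β₁ ε₁ = n ∧
          (∀ ε ∈ Set.Ioo ε₀ 1, L β₁ ε = n → ε = ε₁) ∧
          ∀ ε ∈ Set.Ioo ε₁ 1, L β₁ ε < n := by
  classical
  have hc : 0 < γ (1/2) := hpos (1/2) ⟨by norm_num, by norm_num⟩
  -- denominator positivity
  have hγd : ∀ ε ∈ Set.Ioc (0:ℝ) 1, 0 < γ (ε/2) := fun ε he =>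
    hpos _ ⟨by linarith [he.1], by linarith [he.2]⟩
  -- numerator positivity
  have hnum : ∀ β ∈ Set.Ioc (0:ℝ) 1, ∀ ε ∈ Set.Ioc (0:ℝ) 1,
      0 < Real.log (4/β) + r * Real.log (12/ε) := by
    rintro β ⟨hb0, hb1⟩ ε ⟨he0, he1⟩
    have h1 : 0 < Real.log (4/β) := Real.log_pos (by rw [lt_div_iff₀ hb0]; linarith)
    have h2 : 0 < Real.log (12/ε) := Real.log_pos (by rw [lt_div_iff₀ he0]; linarith)
    nlinarith
  -- strict antitonicity in β
  have monoβ : ∀ ε ∈ Set.Ioc (0:ℝ) 1, ∀ β β' : ℝ, 0 < β → β < β' → β' ≤ 1 →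
      L β' ε < L β ε := by
    intro ε he β β' hb hbb hb'
    rw [hL, hL, div_lt_div_iff_of_pos_right (hγd ε he)]
    have hb'0 : 0 < β' := lt_trans hb hbb
    have : Real.log (4/β') < Real.log (4/β) :=
      Real.log_lt_log (by positivity) (div_lt_div_of_pos_left (by norm_num) hb hbb)
    linarith
  -- strict antitonicity in ε
  have antiε : ∀ β ∈ Set.Ioc (0:ℝ) 1, ∀ ε ε' : ℝ, ε ∈ Set.Ioc (0:ℝ) 1 →
      ε' ∈ Set.Ioc (0:ℝ) 1 → ε < ε' → L β ε' < L β ε := by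
    intro β hb ε ε' he he' hee
    have hd := hγd ε he
    have hd' := hγd ε' he'
    have hdd : γ (ε/2) < γ (ε'/2) :=
      hmono ⟨by linarith [he.1], by linarith [he.2]⟩
        ⟨by linarith [he'.1], by linarith [he'.2]⟩ (by linarith)
    have hN : Real.log (4/β) + r * Real.log (12/ε') <
        Real.log (4/β) + r * Real.log (12/ε) := by
      have hlog : Real.log (12/ε') < Real.log (12/ε) :=
        Real.log_lt_log (by have := he'.1; positivity)
          (div_lt_div_of_pos_left (by norm_num) he.1 hee)
      nlinarith [lt_of_lt_of_le one_pos hr]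
    rw [hL, hL]
    calc (Real.log (4/β) + r * Real.log (12/ε')) / γ (ε'/2)
        < (Real.log (4/β) + r * Real.log (12/ε)) / γ (ε'/2) :=
          (div_lt_div_iff_of_pos_right hd').mpr hN
      _ < (Real.log (4/β) + r * Real.log (12/ε)) / γ (ε/2) :=
          div_lt_div_of_pos_left (hnum β hb ε he) hd hdd
  -- continuity in ε
  have contε : ∀ β : ℝ, ContinuousOn (fun ε => L β ε) (Set.Ioc (0:ℝ) 1) := by
    intro β
    have h1 : ContinuousOn (fun ε : ℝ => Real.log (4/β) + r * Real.log (12/ε))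
        (Set.Ioc (0:ℝ) 1) := by
      apply continuousOn_const.add
      apply continuousOn_const.mul
      apply ContinuousOn.log
      · exact continuousOn_const.div continuousOn_id (fun x hx => ne_of_gt hx.1)
      · intro x hx; have := hx.1; positivity
    have h2 : ContinuousOn (fun ε : ℝ => γ (ε/2)) (Set.Ioc (0:ℝ) 1) :=
      hcont.comp (continuousOn_id.div_const 2)
        (fun x hx => ⟨by linarith [hx.1], by linarith [hx.2]⟩)
    simp only [hL]
    exact h1.div h2 (fun x hx => ne_of_gt (hγd x hx))
  -- continuity in β
  have contβ : ContinuousOn (fun β => L β 1) (Set.Ioc (0:ℝ) 1) := by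
    simp only [hL]
    apply ContinuousOn.div
    · apply ContinuousOn.add _ continuousOn_const
      apply ContinuousOn.log
      · exact continuousOn_const.div continuousOn_id (fun x hx => ne_of_gt hx.1)
      · intro x hx; have := hx.1; positivity
    · exact continuousOn_const
    · intro x _; exact ne_of_gt (hγd 1 ⟨one_pos, le_refl 1⟩)
  have h1mem : (1:ℝ) ∈ Set.Ioc (0:ℝ) 1 := ⟨one_pos, le_refl 1⟩
  -- existence of β₀ via IVT
  have hlog4 : (0:ℝ) < Real.log 4 := Real.log_pos (by norm_num)
  have hlog12 : (0:ℝ) < Real.log 12 := Real.log_pos (by norm_num)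
  set M : ℝ := max (Real.log 4 + 1) (n * γ (1/2)) with hM
  have hM1 : Real.log 4 + 1 ≤ M := le_max_left _ _
  have hM2 : n * γ (1/2) ≤ M := le_max_right _ _
  set a : ℝ := 4 * Real.exp (-M) with ha
  have ha0 : 0 < a := by positivity
  have ha1 : a < 1 := by
    have h4inv : ((4:ℝ)⁻¹) = Real.exp (-Real.log 4) := by
      rw [Real.exp_neg, Real.exp_log (by norm_num : (0:ℝ) < 4)]
    have hlt : Real.exp (-M) < (4:ℝ)⁻¹ := by
      rw [h4inv]; exact Real.exp_lt_exp.mpr (by linarith)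
    calc a = 4 * Real.exp (-M) := ha
      _ < 4 * (4:ℝ)⁻¹ := by linarith
      _ = 1 := by norm_num
  have hLa : n < L a 1 := by
    rw [hL]
    have h4a : 4 / a = Real.exp M := by
      rw [ha]; rw [Real.exp_neg]; field_simp
    rw [h4a, Real.log_exp]
    rw [lt_div_iff₀ (hγd 1 h1mem)]
    have : 0 < r * Real.log (12/1) := by
      rw [div_one]; positivity
    rw [div_one] at this ⊢
    nlinarith
  have hβ₀ : ∃ β₀ ∈ Set.Ioo a 1, L β₀ 1 = n := by
    have hsub : Set.Icc a 1 ⊆ Set.Ioc (0:ℝ) 1 := fun x hx => ⟨lt_of_lt_of_le ha0 hx.1, hx.2⟩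
    have := intermediate_value_Ioo' (le_of_lt ha1) (contβ.mono hsub)
      (Set.mem_Ioo.mpr ⟨hn, hLa⟩)
    obtain ⟨β₀, hβ₀mem, hβ₀eq⟩ := this
    exact ⟨β₀, hβ₀mem, hβ₀eq⟩
  obtain ⟨β₀, hβ₀mem, hβ₀eq⟩ := hβ₀
  have hβ₀Ioo : β₀ ∈ Set.Ioo (0:ℝ) 1 := ⟨lt_trans ha0 hβ₀mem.1, hβ₀mem.2⟩
  -- existence of ε₀ via IVT
  set M' : ℝ := max (Real.log 12 + 1) (n * γ (1/2)) with hM'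
  have hM'1 : Real.log 12 + 1 ≤ M' := le_max_left _ _
  have hM'2 : n * γ (1/2) ≤ M' := le_max_right _ _
  have hM'0 : 0 < M' := lt_of_lt_of_le (by linarith) hM'1
  set e : ℝ := 12 * Real.exp (-M') with he
  have he0 : 0 < e := by positivity
  have he1 : e < 1 := by
    have h12inv : ((12:ℝ)⁻¹) = Real.exp (-Real.log 12) := by
      rw [Real.exp_neg, Real.exp_log (by norm_num : (0:ℝ) < 12)]
    have hlt : Real.exp (-M') < (12:ℝ)⁻¹ := by
      rw [h12inv]; exact Real.exp_lt_exp.mpr (by linarith)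
    calc e = 12 * Real.exp (-M') := he
      _ < 12 * (12:ℝ)⁻¹ := by linarith
      _ = 1 := by norm_num
  have heIoc : e ∈ Set.Ioc (0:ℝ) 1 := ⟨he0, le_of_lt he1⟩
  have hLe : n < L 1 e := by
    rw [hL]
    have h12e : 12 / e = Real.exp M' := by
      rw [he]; rw [Real.exp_neg]; field_simp
    rw [h12e, Real.log_exp, div_one]
    have hde := hγd e heIoc
    have hγle : γ (e/2) < γ (1/2) :=
      hmono ⟨by linarith, by linarith⟩ ⟨by norm_num, by norm_num⟩ (by linarith)
    have hNpos : 0 < Real.log 4 + r * M' := by nlinarith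
    have step1 : n < (Real.log 4 + r * M') / γ (1/2) := by
      rw [lt_div_iff₀ hc]; nlinarith
    have step2 : (Real.log 4 + r * M') / γ (1/2) < (Real.log 4 + r * M') / γ (e/2) :=
      div_lt_div_of_pos_left hNpos hde hγle
    linarith
  have hε₀ : ∃ ε₀ ∈ Set.Ioo e 1, L 1 ε₀ = n := by
    have hsub : Set.Icc e 1 ⊆ Set.Ioc (0:ℝ) 1 := fun x hx => ⟨lt_of_lt_of_le he0 hx.1, hx.2⟩
    have := intermediate_value_Ioo' (le_of_lt he1) ((contε 1).mono hsub)
      (Set.mem_Ioo.mpr ⟨hn, hLe⟩)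
    obtain ⟨ε₀, hε₀mem, hε₀eq⟩ := this
    exact ⟨ε₀, hε₀mem, hε₀eq⟩
  obtain ⟨ε₀, hε₀mem, hε₀eq⟩ := hε₀
  have hε₀Ioo : ε₀ ∈ Set.Ioo (0:ℝ) 1 := ⟨lt_trans he0 hε₀mem.1, hε₀mem.2⟩
  have hε₀Ioc : ε₀ ∈ Set.Ioc (0:ℝ) 1 := ⟨hε₀Ioo.1, le_of_lt hε₀Ioo.2⟩
  refine ⟨β₀, hβ₀Ioo, ε₀, hε₀Ioo, hβ₀eq, hε₀eq, ?_, ?_, ?_⟩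
  -- uniqueness of β₀
  · intro β hβ hβeq
    by_contra hne
    rcases lt_or_gt_of_ne hne with h | h
    · have := monoβ 1 h1mem β β₀ hβ.1 h (le_of_lt hβ₀Ioo.2)
      rw [hβeq, hβ₀eq] at this; exact lt_irrefl n this
    · have := monoβ 1 h1mem β₀ β hβ₀Ioo.1 h (le_of_lt hβ.2)
      rw [hβeq, hβ₀eq] at this; exact lt_irrefl n this
  -- uniqueness of ε₀
  · intro ε hε hεeq
    by_contra hne
    rcases lt_or_gt_of_ne hne with h | h
    · have := antiε 1 h1mem ε ε₀ ⟨hε.1, le_of_lt hε.2⟩ hε₀Ioc h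
      rw [hεeq, hε₀eq] at this; exact lt_irrefl n this
    · have := antiε 1 h1mem ε₀ ε hε₀Ioc ⟨hε.1, le_of_lt hε.2⟩ h
      rw [hεeq, hε₀eq] at this; exact lt_irrefl n this
  -- main part
  · intro β₁ hβ₁
    have hβ₁Ioc : β₁ ∈ Set.Ioc (0:ℝ) 1 :=
      ⟨lt_trans hβ₀Ioo.1 hβ₁.1, le_of_lt hβ₁.2⟩
    have hlow : n < L β₁ ε₀ := by
      have := monoβ ε₀ hε₀Ioc β₁ 1 hβ₁Ioc.1 hβ₁.2 (le_refl 1)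
      rw [hε₀eq] at this; exact this
    have hhigh : L β₁ 1 < n := by
      have := monoβ 1 h1mem β₀ β₁ hβ₀Ioo.1 hβ₁.1 hβ₁Ioc.2
      rw [hβ₀eq] at this; exact this
    have hsub : Set.Icc ε₀ 1 ⊆ Set.Ioc (0:ℝ) 1 :=
      fun x hx => ⟨lt_of_lt_of_le hε₀Ioo.1 hx.1, hx.2⟩
    obtain ⟨ε₁, hε₁mem, hε₁eq⟩ := intermediate_value_Ioo' (le_of_lt hε₀Ioo.2)
      ((contε β₁).mono hsub) (Set.mem_Ioo.mpr ⟨hhigh, hlow⟩)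
    replace hε₁eq : L β₁ ε₁ = n := hε₁eq
    have hε₁Ioc : ε₁ ∈ Set.Ioc (0:ℝ) 1 :=
      ⟨lt_trans hε₀Ioo.1 hε₁mem.1, le_of_lt hε₁mem.2⟩
    refine ⟨ε₁, hε₁mem, hε₁eq, ?_, ?_⟩
    · intro ε hε hεeq
      have hεIoc : ε ∈ Set.Ioc (0:ℝ) 1 := ⟨lt_trans hε₀Ioo.1 hε.1, le_of_lt hε.2⟩
      by_contra hne
      rcases lt_or_gt_of_ne hne with h | h
      · have := antiε β₁ hβ₁Ioc ε ε₁ hεIoc hε₁Ioc h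
        rw [hεeq, hε₁eq] at this; exact lt_irrefl n this
      · have := antiε β₁ hβ₁Ioc ε₁ ε hε₁Ioc hεIoc h
        rw [hεeq, hε₁eq] at this; exact lt_irrefl n this
    · intro ε hε
      have hεIoc : ε ∈ Set.Ioc (0:ℝ) 1 := ⟨lt_trans hε₁Ioc.1 hε.1, le_of_lt hε.2⟩
      have := antiε β₁ hβ₁Ioc ε₁ ε hε₁Ioc hεIoc hε.1
      rw [hε₁eq] at this; exact this
end

section
/- Let W be an n×n real symmetric matrix with eigenvalues in [0,1] and Φ_W as above. Then for every u ∈ ℝ^n, the point Wu is the unique minimizer over x ∈ ℝ^n of ½‖x−u‖² + Φ_W(x); i.e., the linear map x ↦ Wx is the proximal operator of Φ_W. -/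
open Matrix Classical

/-- The four Penrose conditions characterizing the Moore–Penrose pseudoinverse. -/
def IsMoorePenroseInverse {n : ℕ} (W P : Matrix (Fin n) (Fin n) ℝ) : Prop :=
  W * P * W = W ∧ P * W * P = P ∧ (W * P)ᵀ = W * P ∧ (P * W)ᵀ = P * W

/-- The PnP regularizer `Φ_W(x) = ½ xᵀ(I-W)W†x` on `range(W)`, `+∞` elsewhere. -/
noncomputable def PnPRegularizer {n : ℕ} (W P : Matrix (Fin n) (Fin n) ℝ)
    (x : Fin n → ℝ) : EReal :=
  if x ∈ LinearMap.range W.mulVecLin then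
    (((1 / 2 : ℝ) * (x ⬝ᵥ ((1 - W) * P).mulVec x) : ℝ) : EReal)
  else ⊤

/-- The proximal objective `x ↦ ½‖x - u‖² + Φ_W(x)` (Euclidean norm, as a dot
product), with values in the extended reals. -/
noncomputable def proxObjective {n : ℕ} (W P : Matrix (Fin n) (Fin n) ℝ)
    (u x : Fin n → ℝ) : EReal :=
  (((1 / 2 : ℝ) * ((x - u) ⬝ᵥ (x - u)) : ℝ) : EReal) + PnPRegularizer W P x

/-!
On `range W` write `x = W z`. Using `W W† W = W` and the symmetry of `W`, the objective becomes
`½ zᵀWz - uᵀWz + ½‖u‖²`, a convex quadratic in `z` because `W ⪰ 0`. Its excess over the value at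
`z = u` is `½ (z - u)ᵀW(z - u)`, which is positive unless `W z = W u`. Off `range W` the objective
is `+∞`.
-/

namespace Matrix

variable {ι R : Type*} [Fintype ι] [CommRing R]

theorem mulVec_dotProduct_mulVec (A B : Matrix ι ι R) (v w : ι → R) :
    A *ᵥ v ⬝ᵥ B *ᵥ w = v ⬝ᵥ (Aᵀ * B) *ᵥ w := by
  rw [dotProduct_mulVec, dotProduct_mulVec, vecMul_mulVec]

theorem IsSymm.dotProduct_mulVec_comm {A : Matrix ι ι R} (hA : A.IsSymm) (v w : ι → R) :
    v ⬝ᵥ A *ᵥ w = w ⬝ᵥ A *ᵥ v := by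
  rw [← dotProduct_transpose_mulVec, hA.eq]

theorem IsSymm.sub_dotProduct_mulVec_sub {A : Matrix ι ι R} (hA : A.IsSymm) (v w : ι → R) :
    (v - w) ⬝ᵥ A *ᵥ (v - w) = v ⬝ᵥ A *ᵥ v - 2 * (w ⬝ᵥ A *ᵥ v) + w ⬝ᵥ A *ᵥ w := by
  rw [mulVec_sub, dotProduct_sub, sub_dotProduct, sub_dotProduct, hA.dotProduct_mulVec_comm v w]
  ring

theorem IsSymm.mulVec_dotProduct_add_pseudoinverse_form [DecidableEq ι] {W P : Matrix ι ι R}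
    (hW : W.IsSymm) (hWPW : W * P * W = W) (z : ι → R) :
    W *ᵥ z ⬝ᵥ W *ᵥ z + W *ᵥ z ⬝ᵥ ((1 - W) * P) *ᵥ W *ᵥ z = z ⬝ᵥ W *ᵥ z := by
  have hform : W * ((1 - W) * P * W) = W - W * W := by
    rw [show W * ((1 - W) * P * W) = W * P * W - W * (W * P * W) by noncomm_ring, hWPW]
  rw [mulVec_mulVec, mulVec_dotProduct_mulVec, mulVec_dotProduct_mulVec, hW.eq, hform,
    sub_mulVec, dotProduct_sub, add_sub_cancel]

theorem PosSemidef.dotProduct_mulVec_pos {A : Matrix ι ι ℝ} (hA : A.PosSemidef) {v : ι → ℝ}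
    (hv : A *ᵥ v ≠ 0) : 0 < v ⬝ᵥ A *ᵥ v := by
  have hnonneg : 0 ≤ v ⬝ᵥ A *ᵥ v := by simpa using hA.dotProduct_mulVec_nonneg v
  have hne : v ⬝ᵥ A *ᵥ v ≠ 0 := fun h => hv ((hA.dotProduct_mulVec_zero_iff v).mp (by simpa))
  exact hnonneg.lt_of_ne' hne

end Matrix

variable {n : ℕ} {W P : Matrix (Fin n) (Fin n) ℝ}

theorem proxObjective_mulVec (hW : W.IsSymm) (hWPW : W * P * W = W) (u z : Fin n → ℝ) :
    proxObjective W P u (W *ᵥ z) =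
      ((1 / 2 * (z ⬝ᵥ W *ᵥ z) - u ⬝ᵥ W *ᵥ z + 1 / 2 * (u ⬝ᵥ u) : ℝ) : EReal) := by
  have hform := hW.mulVec_dotProduct_add_pseudoinverse_form hWPW z
  rw [proxObjective, PnPRegularizer, if_pos ⟨z, rfl⟩, ← EReal.coe_add, EReal.coe_eq_coe_iff]
  rw [dotProduct_sub, sub_dotProduct, sub_dotProduct, dotProduct_comm (W *ᵥ z) u]
  linear_combination (1 / 2 : ℝ) * hform

theorem proxObjective_of_notMem_range {u x : Fin n → ℝ} (hx : x ∉ LinearMap.range W.mulVecLin) :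
    proxObjective W P u x = ⊤ := by
  rw [proxObjective, PnPRegularizer, if_neg hx]
  exact EReal.add_top_of_ne_bot (EReal.coe_ne_bot _)

theorem proxObjective_mulVec_lt (hW : W.PosSemidef) (hWPW : W * P * W = W) {u y : Fin n → ℝ}
    (hne : W *ᵥ y ≠ W *ᵥ u) : proxObjective W P u (W *ᵥ u) < proxObjective W P u (W *ᵥ y) := by
  have hsymm : W.IsSymm := isHermitian_iff_isSymm.mp hW.isHermitian
  have hpos : 0 < (y - u) ⬝ᵥ W *ᵥ (y - u) :=
    hW.dotProduct_mulVec_pos (by rwa [mulVec_sub, sub_ne_zero])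
  rw [hsymm.sub_dotProduct_mulVec_sub] at hpos
  rw [proxObjective_mulVec hsymm hWPW, proxObjective_mulVec hsymm hWPW, EReal.coe_lt_coe_iff]
  linarith

/-- For a real symmetric `W` with eigenvalues in `[0,1]`, the point `Wu` is the
unique minimizer of `x ↦ ½‖x - u‖² + Φ_W(x)`; i.e., `x ↦ Wx` is the proximal
operator of `Φ_W`. -/
theorem mulVec_is_prox {n : ℕ} (W P : Matrix (Fin n) (Fin n) ℝ)
    (hW : W.IsHermitian) (heig : ∀ i, hW.eigenvalues i ∈ Set.Icc (0 : ℝ) 1)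
    (hP : IsMoorePenroseInverse W P) (u : Fin n → ℝ) :
    ∀ x : Fin n → ℝ, x ≠ W.mulVec u →
      proxObjective W P u (W.mulVec u) < proxObjective W P u x := by
  have hpsd : W.PosSemidef := hW.posSemidef_iff_eigenvalues_nonneg.mpr fun i => (heig i).1
  intro x hx
  by_cases hrange : x ∈ LinearMap.range W.mulVecLin
  · obtain ⟨y, rfl⟩ := hrange
    exact proxObjective_mulVec_lt hpsd hP.1 hx
  · rw [proxObjective_of_notMem_range hrange,
      proxObjective_mulVec (isHermitian_iff_isSymm.mp hW) hP.1]
    exact EReal.coe_lt_top _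
end
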